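/- Let H₀, H₁ ∈ B(𝓗) be self-adjoint, let c ∈ ℝ, set H := H₀ + c·H₁, and assume that the spectra of H₀ and of H are both contained in [1,∞). With K₀ := ‖H₁·(√H₀)⁻¹‖, one has ‖√H·(√H₀)⁻¹‖ ≤ √(1 + |c|·K₀). -/

import Mathlib

/-!
Write `R := √H₀`. Since `R⁻¹ H₀ R⁻¹ = 1`, the C⋆-identity gives
`‖√H R⁻¹‖² = ‖R⁻¹ H R⁻¹‖ = ‖1 + c R⁻¹ H₁ R⁻¹‖ ≤ 1 + |c| ‖R⁻¹‖ ‖H₁ R⁻¹‖`,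
and `‖R⁻¹‖ ≤ 1` because `1 ≤ H₀` forces `1 ≤ R`, hence `R⁻¹ ≤ 1`.
-/

open Ring CFC CStarAlgebra

namespace CStarAlgebra

variable {A : Type*} [CStarAlgebra A] [PartialOrder A] [StarOrderedRing A]

lemma one_le_of_spectrum_subset_Ici_one {a : A} (ha : IsSelfAdjoint a)
    (h : spectrum ℝ a ⊆ Set.Ici 1) : 1 ≤ a := by
  simpa using (algebraMap_le_iff_le_spectrum (r := (1 : ℝ)) ha).mpr h

lemma norm_ringInverse_le_one_of_one_le {a : A} (ha : 1 ≤ a) : ‖a⁻¹ʳ‖ ≤ 1 := by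
  have hpos : IsStrictlyPositive a := isStrictlyPositive_one.of_le ha
  rw [norm_le_one_iff_of_nonneg _ hpos.ringInverse.nonneg]
  simpa using ringInverse_le_ringInverse ha

lemma one_le_sqrt_of_one_le {a : A} (ha : 1 ≤ a) : 1 ≤ sqrt a :=
  sqrt_one (A := A) ▸ sqrt_le_sqrt 1 a ha

lemma ringInverse_sqrt_mul_self_mul_ringInverse_sqrt {a : A} (ha : IsStrictlyPositive a) :
    (sqrt a)⁻¹ʳ * a * (sqrt a)⁻¹ʳ = 1 := by
  rw [← sqrt_ringInverse, ← conjSqrt_apply, conjSqrt_ringInverse_self a ha]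

lemma norm_sqrt_mul_sq {b r : A} (hb : 0 ≤ b) (hr : IsSelfAdjoint r) :
    ‖sqrt b * r‖ ^ 2 = ‖r * b * r‖ := by
  rw [sq, ← CStarRing.norm_star_mul_self, star_mul, hr.star_eq,
    (IsSelfAdjoint.of_nonneg (sqrt_nonneg b)).star_eq, mul_assoc, ← mul_assoc (sqrt b),
    sqrt_mul_sqrt_self b hb, ← mul_assoc]

lemma norm_sqrt_add_smul_mul_ringInverse_sqrt_sq_le {a h : A} (c : ℝ) (ha : 1 ≤ a)
    (hac : 0 ≤ a + c • h) :
    ‖sqrt (a + c • h) * (sqrt a)⁻¹ʳ‖ ^ 2 ≤ 1 + |c| * ‖h * (sqrt a)⁻¹ʳ‖ := by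
  nontriviality A
  set r := (sqrt a)⁻¹ʳ
  have hpos : IsStrictlyPositive a := isStrictlyPositive_one.of_le ha
  have hr : IsSelfAdjoint r := (hpos.sqrt.ringInverse).isSelfAdjoint
  have hr_norm : ‖r‖ ≤ 1 := norm_ringInverse_le_one_of_one_le (one_le_sqrt_of_one_le ha)
  calc ‖sqrt (a + c • h) * r‖ ^ 2 = ‖r * (a + c • h) * r‖ := norm_sqrt_mul_sq hac hr
    _ = ‖1 + c • (r * (h * r))‖ := by
      rw [mul_add, add_mul, ringInverse_sqrt_mul_self_mul_ringInverse_sqrt hpos, mul_smul_comm,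
        smul_mul_assoc, mul_assoc]
    _ ≤ 1 + |c| * (‖r‖ * ‖h * r‖) := by
      grw [norm_add_le, norm_smul, norm_mul_le, CStarRing.norm_one, Real.norm_eq_abs]
    _ ≤ 1 + |c| * ‖h * r‖ := by
      grw [hr_norm, one_mul]

end CStarAlgebra

variable {𝓗 : Type*} [NormedAddCommGroup 𝓗] [InnerProductSpace ℂ 𝓗] [CompleteSpace 𝓗]

/-- Let `H := H₀ + c·H₁` with `H₀, H₁` self-adjoint and spectra of `H₀` and `H`
in `[1,∞)`.  With `K₀ := ‖H₁·(√H₀)⁻¹‖`, one has `‖√H·(√H₀)⁻¹‖ ≤ √(1 + |c|·K₀)`. -/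
theorem stmt_11 (H₀ H₁ : 𝓗 →L[ℂ] 𝓗) (hH₀ : IsSelfAdjoint H₀) (hH₁ : IsSelfAdjoint H₁)
    (c : ℝ) (H : 𝓗 →L[ℂ] 𝓗) (hH : H = H₀ + c • H₁)
    (hspec₀ : spectrum ℝ H₀ ⊆ Set.Ici 1) (hspec : spectrum ℝ H ⊆ Set.Ici 1)
    (K₀ : ℝ) (hK₀ : K₀ = ‖H₁ * Ring.inverse (CFC.sqrt H₀)‖) :
    ‖CFC.sqrt H * Ring.inverse (CFC.sqrt H₀)‖ ≤ Real.sqrt (1 + |c| * K₀) := by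
  have hH_sa : IsSelfAdjoint H := hH ▸ hH₀.add ((IsSelfAdjoint.all c).smul hH₁)
  have hH_nonneg : 0 ≤ H := zero_le_one.trans (one_le_of_spectrum_subset_Ici_one hH_sa hspec)
  subst hH hK₀
  exact Real.le_sqrt_of_sq_le <| norm_sqrt_add_smul_mul_ringInverse_sqrt_sq_le c
    (one_le_of_spectrum_subset_Ici_one hH₀ hspec₀) hH_nonneg
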